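/- Let 0 < μ ≤ S, let l₁,…,l_n : ℝ → ℝ be twice differentiable with μ ≤ l_i''(t) ≤ S for all t and all i, let B be a real n×N matrix whose j-th column is nonzero, and define L(β) = Σ_{i=1}^n l_i((Bβ)_i). Then for every β ∈ ℝ^N, with g = ∇_j L(β) and h = ∇²_j L(β) (so h > 0), the damped coordinate Newton step satisfies L(β − (μ/S)(g/h) e_j) ≤ L(β) − (μ/(2S))·g²/h. -/

import Mathlib

open Finset

lemma quad_upper {S : ℝ} (f : ℝ → ℝ) (hf : Differentiable ℝ f)
    (hf' : Differentiable ℝ (deriv f))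
    (hS : ∀ t, deriv (deriv f) t ≤ S) (x y : ℝ) :
    f y ≤ f x + deriv f x * (y - x) + S / 2 * (y - x) ^ 2 := by
  have hu : Monotone (fun t => S * t - deriv f t) := by
    apply monotone_of_deriv_nonneg
    · exact ((differentiable_const S).mul differentiable_id).sub hf'
    · intro t
      have h1 : HasDerivAt (fun t => S * t - deriv f t) (S - deriv (deriv f) t) t :=
        ((hasDerivAt_id t).const_mul S).sub (hf' t).hasDerivAt |>.congr_deriv (by ring)
      rw [h1.deriv]
      linarith [hS t]
  set q : ℝ → ℝ := fun y => f x + deriv f x * (y - x) + S / 2 * (y - x) ^ 2 - f y with hqdef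
  have hq : ∀ t, HasDerivAt q (deriv f x + S * (t - x) - deriv f t) t := by
    intro t
    have h1 : HasDerivAt (fun y => f x + deriv f x * (y - x) + S / 2 * (y - x) ^ 2)
        (deriv f x + S * (t - x)) t := by
      have hbase : HasDerivAt (fun y : ℝ => y - x) 1 t := (hasDerivAt_id t).sub_const x
      have := ((hasDerivAt_const t (f x)).add (hbase.const_mul (deriv f x))).add
        ((hbase.pow 2).const_mul (S / 2))
      refine this.congr_deriv ?_
      ring
    exact h1.sub (hf t).hasDerivAt
  have hqd : Differentiable ℝ q := fun t => (hq t).differentiableAt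
  have hqx : q x = 0 := by simp [hqdef]
  have key : 0 ≤ q y := by
    rcases le_total x y with hxy | hxy
    · have hm : MonotoneOn q (Set.Ici x) := by
        apply monotoneOn_of_deriv_nonneg (convex_Ici x) hqd.continuous.continuousOn
          (hqd.differentiableOn)
        intro t ht
        rw [(hq t).deriv]
        have : S * x - deriv f x ≤ S * t - deriv f t := hu (le_of_lt (by simpa using ht))
        linarith
      have := hm (Set.self_mem_Ici) (Set.mem_Ici.2 hxy) hxy
      linarith [hqx ▸ this]
    · have hm : AntitoneOn q (Set.Iic x) := by
        apply antitoneOn_of_deriv_nonpos (convex_Iic x) hqd.continuous.continuousOn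
          (hqd.differentiableOn)
        intro t ht
        rw [(hq t).deriv]
        have : S * t - deriv f t ≤ S * x - deriv f x := hu (le_of_lt (by simpa using ht))
        linarith
      have := hm (Set.mem_Iic.2 hxy) (Set.self_mem_Iic) hxy
      linarith [hqx ▸ this]
  simp only [hqdef] at key
  linarith

/-- Per-iteration descent inequality (equation (9), first step) of Theorem 1: for
`L(β) = ∑ i, l i ((B β) i)` with `μ ≤ l i '' ≤ S` and `j`-th column of `B` nonzero,
the damped coordinate Newton step with learning rate `ε = μ / S` satisfies
`L(β - ε (g/h) e_j) ≤ L(β) - (μ/(2S)) g²/h`,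
where `g = ∇_j L(β)` and `h = ∇²_j L(β)`. -/
theorem coordinate_newton_descent {n N : ℕ} {μ S : ℝ}
    (hμ : 0 < μ) (hμS : μ ≤ S)
    (l : Fin n → ℝ → ℝ)
    (hdiff : ∀ i, Differentiable ℝ (l i))
    (hdiff2 : ∀ i, Differentiable ℝ (deriv (l i)))
    (hlow : ∀ i t, μ ≤ deriv (deriv (l i)) t)
    (hupp : ∀ i t, deriv (deriv (l i)) t ≤ S)
    (B : Matrix (Fin n) (Fin N) ℝ)
    (j : Fin N) (hcol : ∃ i, B i j ≠ 0)
    (β : Fin N → ℝ) :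
    (∑ i, l i (B.mulVec (β - Pi.single j ((μ / S) *
        ((∑ i, deriv (l i) (B.mulVec β i) * B i j) /
          (∑ i, deriv (deriv (l i)) (B.mulVec β i) * (B i j) ^ 2)))) i)) ≤
      (∑ i, l i (B.mulVec β i))
        - (μ / (2 * S)) *
            ((∑ i, deriv (l i) (B.mulVec β i) * B i j) ^ 2 /
              (∑ i, deriv (deriv (l i)) (B.mulVec β i) * (B i j) ^ 2)) := by
  have hS : 0 < S := lt_of_lt_of_le hμ hμS
  set x : Fin n → ℝ := B.mulVec β with hx
  set b : Fin n → ℝ := fun i => B i j with hb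
  set g : ℝ := ∑ i, deriv (l i) (x i) * b i with hg
  set h : ℝ := ∑ i, deriv (deriv (l i)) (x i) * b i ^ 2 with hh
  set b2 : ℝ := ∑ i, b i ^ 2 with hb2
  have hb2pos : 0 < b2 := by
    obtain ⟨i0, hi0⟩ := hcol
    exact Finset.sum_pos' (fun i _ => sq_nonneg _)
      ⟨i0, Finset.mem_univ i0, by positivity⟩
  have hhlow : μ * b2 ≤ h := by
    rw [hb2, Finset.mul_sum]
    exact Finset.sum_le_sum fun i _ =>
      mul_le_mul_of_nonneg_right (hlow i (x i)) (sq_nonneg _)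
  have hhupp : h ≤ S * b2 := by
    rw [hb2, Finset.mul_sum]
    exact Finset.sum_le_sum fun i _ =>
      mul_le_mul_of_nonneg_right (hupp i (x i)) (sq_nonneg _)
  have hhpos : 0 < h := lt_of_lt_of_le (by positivity) hhlow
  set s : ℝ := (μ / S) * (g / h) with hs
  -- the new point coordinate-wise
  have hnew : ∀ i, B.mulVec (β - Pi.single j s) i = x i - s * b i := by
    intro i
    have : B.mulVec (Pi.single j s) i = b i * s := by
      rw [Matrix.mulVec, dotProduct, Finset.sum_eq_single j]
      · simp [hb]
      · intro k _ hk; simp [Pi.single_apply, hk]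
      · simp
    rw [Matrix.mulVec_sub]
    simp [this, hx]
    exact Or.inl rfl
  have hsum : (∑ i, l i (B.mulVec (β - Pi.single j s) i)) ≤
      (∑ i, l i (x i)) - g * s + S / 2 * s ^ 2 * b2 := by
    have hterm : ∀ i, l i (x i - s * b i) ≤
        l i (x i) - deriv (l i) (x i) * (s * b i) + S / 2 * (s * b i) ^ 2 := by
      intro i
      have := quad_upper (l i) (hdiff i) (hdiff2 i) (hupp i) (x i) (x i - s * b i)
      simpa [sub_eq_add_neg] using (by linarith [this] : l i (x i - s * b i) ≤
        l i (x i) + deriv (l i) (x i) * (x i - s * b i - x i)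
          + S / 2 * (x i - s * b i - x i) ^ 2)
    calc (∑ i, l i (B.mulVec (β - Pi.single j s) i))
        = ∑ i, l i (x i - s * b i) := by simp_rw [hnew]
      _ ≤ ∑ i, (l i (x i) - deriv (l i) (x i) * (s * b i) + S / 2 * (s * b i) ^ 2) :=
          Finset.sum_le_sum fun i _ => by
            have := hterm i
            have he : x i - s * b i - x i = -(s * b i) := by ring
            calc l i (x i - s * b i) ≤ _ := quad_upper (l i) (hdiff i) (hdiff2 i) (hupp i) (x i) _
              _ = l i (x i) - deriv (l i) (x i) * (s * b i) + S / 2 * (s * b i) ^ 2 := by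
                  rw [he]; ring
      _ = (∑ i, l i (x i)) - g * s + S / 2 * s ^ 2 * b2 := by
          rw [Finset.sum_add_distrib, Finset.sum_sub_distrib]
          congr 1
          · congr 1
            rw [hg, Finset.sum_mul]
            congr 1; ext i; ring
          · rw [hb2, Finset.mul_sum]
            congr 1; ext i; ring
  refine le_trans hsum ?_
  -- arithmetic
  have harith : (μ / (2 * S)) * (g ^ 2 / h) ≤ g * s - S / 2 * s ^ 2 * b2 := by
    have e1 : g * s - S / 2 * s ^ 2 * b2 - (μ / (2 * S)) * (g ^ 2 / h)
        = (μ * g ^ 2 / (2 * S * h ^ 2)) * (h - μ * b2) := by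
      rw [hs]
      field_simp
      ring
    nlinarith [mul_nonneg (by positivity : (0:ℝ) ≤ μ * g ^ 2 / (2 * S * h ^ 2))
      (by linarith : (0:ℝ) ≤ h - μ * b2)]
  linarith
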